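/- A reflexive digraph R ∈ 𝔗_a belongs to 𝕽 if and only if for every G ∈ 𝔗_a with h_G = h_R: 𝓢(G,R) ≠ ∅ implies 𝓜^{𝓛(G)}(G,R) ∩ 𝓢(G,R) ≠ ∅. -/

import Mathlib

/-- A finite digraph: a finite nonempty vertex set `V ⊆ ℕ` together with an
arc set `A ⊆ V × V`. -/
structure Dgraph where
  V : Finset ℕ
  nonempty : V.Nonempty
  A : Finset (ℕ × ℕ)
  A_sub : ∀ p ∈ A, p.1 ∈ V ∧ p.2 ∈ V

namespace Dgraph

/-- The set of proper arcs of `G`, i.e. the arc set of `G*`. -/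
def Astar (G : Dgraph) : Finset (ℕ × ℕ) := G.A.filter (fun p => p.1 ≠ p.2)

/-- `G` is reflexive. -/
def IsRefl (G : Dgraph) : Prop := ∀ v ∈ G.V, (v, v) ∈ G.A

/-- `p` is a path in `G` (a nonempty list of pairwise distinct vertices,
consecutive ones joined by arcs).  Its length as a path is `p.length - 1`. -/
def IsPath (G : Dgraph) (p : List ℕ) : Prop :=
  p ≠ [] ∧ p.Nodup ∧ (∀ v ∈ p, v ∈ G.V) ∧ p.Chain' (fun v w => (v, w) ∈ G.A)

/-- `p` is a path in `G*`. -/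
def IsPathStar (G : Dgraph) (p : List ℕ) : Prop :=
  p ≠ [] ∧ p.Nodup ∧ (∀ v ∈ p, v ∈ G.V) ∧ p.Chain' (fun v w => (v, w) ∈ G.A ∧ v ≠ w)

/-- `G*` contains a closed walk. -/
def HasClosedWalkStar (G : Dgraph) : Prop :=
  ∃ p : List ℕ, (∀ v ∈ p, v ∈ G.V) ∧ p.Chain' (fun v w => (v, w) ∈ G.A ∧ v ≠ w) ∧
    2 ≤ p.length ∧ p.head? = p.getLast?

/-- membership in the class `𝔗ₐ`: `G*` is acyclic. -/
def MemTa (G : Dgraph) : Prop := ¬ G.HasClosedWalkStar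

/-- The height of `G`: the maximal length of a path in `G`. -/
noncomputable def height (G : Dgraph) : ℕ :=
  sSup {n | ∃ p, G.IsPath p ∧ p.length = n + 1}

/-- The interval `[v,w]_G`. -/
def interval (G : Dgraph) (v w : ℕ) : Finset ℕ :=
  G.V.filter (fun z => (v, z) ∈ G.A ∧ (z, w) ∈ G.A)

/-- `ι(v,w)_G`, the cardinality of the interval `[v,w]_G`. -/
def iota (G : Dgraph) (v w : ℕ) : ℕ := (G.interval v w).card

/-- The set `𝓗(G,H)` of homomorphisms from `G` to `H` (represented as total
maps `ℕ → ℕ`, normalized to `0` outside of `V(G)`). -/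
def Hom (G H : Dgraph) : Set (ℕ → ℕ) :=
  {f | (∀ v ∈ G.V, f v ∈ H.V) ∧ (∀ p ∈ G.A, (f p.1, f p.2) ∈ H.A) ∧
    ∀ v, v ∉ G.V → f v = 0}

/-- The set `𝓢(G,H)` of strict homomorphisms from `G` to `H`. -/
def SHom (G H : Dgraph) : Set (ℕ → ℕ) :=
  {f ∈ Hom G H | ∀ p ∈ G.Astar, f p.1 ≠ f p.2}

/-- `μ_ξ(G)`, for a homomorphism `ξ` from `G` into `H`. -/
def mu (G H : Dgraph) (f : ℕ → ℕ) : ℕ :=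
  ∑ p ∈ G.Astar, H.iota (f p.1) (f p.2)

/-- `L` is a subgraph of `G`. -/
def Subgraph (L G : Dgraph) : Prop := L.V ⊆ G.V ∧ L.A ⊆ G.A

/-- Restriction of a map to a vertex set (normalized to `0` outside). -/
def restrict (X : Finset ℕ) (f : ℕ → ℕ) : ℕ → ℕ := fun x => if x ∈ X then f x else 0

/-- `𝓜(L,H)`: homomorphisms from `L` to `H` with maximal `μ`. -/
def MSet (L H : Dgraph) : Set (ℕ → ℕ) :=
  {f ∈ Hom L H | ∀ g ∈ Hom L H, mu L H g ≤ mu L H f}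

/-- `𝓜^𝓛(G,H)`. -/
def MLSet (G H : Dgraph) (𝓛 : Set Dgraph) : Set (ℕ → ℕ) :=
  {f ∈ Hom G H | ∀ L ∈ 𝓛, restrict L.V f ∈ MSet L H}

/-- `𝓙^𝓛_{G,H'}(ξ)` for `ξ ∈ 𝓗(G,H)`. -/
def JSet (G H H' : Dgraph) (𝓛 : Set Dgraph) (ξ : ℕ → ℕ) : Set (ℕ → ℕ) :=
  {ζ ∈ Hom G H' | ∀ L ∈ 𝓛, ∀ p ∈ L.Astar,
    H'.iota (ζ p.1) (ζ p.2) = H.iota (ξ p.1) (ξ p.2)}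

/-- The digraph `P_×` of a path `P = P_0, …, P_ℓ`: vertex set `{P_0,…,P_ℓ}`
and arcs `P_{i-1}P_i`. -/
def pathGraph (P : List ℕ) (h : P ≠ []) : Dgraph where
  V := P.toFinset
  nonempty := by
    obtain ⟨a, t, rfl⟩ := List.exists_cons_of_ne_nil h
    exact ⟨a, by simp⟩
  A := (P.zip P.tail).toFinset
  A_sub := by
    intro p hp
    rw [List.mem_toFinset] at hp
    have h1 := List.of_mem_zip hp
    exact ⟨List.mem_toFinset.mpr h1.1, List.mem_toFinset.mpr (List.mem_of_mem_tail h1.2)⟩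

/-- `𝓛(G)`: the set of the digraphs `P_×` for the paths `P` of length `h_G` in `G`. -/
def LSet (G : Dgraph) : Set Dgraph :=
  {D | ∃ (P : List ℕ) (h : P ≠ []), G.IsPath P ∧ P.length = G.height + 1 ∧
    D = pathGraph P h}

/-- The class `𝕽`: reflexive digraphs `R ∈ 𝔗ₐ` with
`𝓜^{𝓛(R)}(R,R) ∩ 𝓢(R,R) ≠ ∅`. -/
def MemR (R : Dgraph) : Prop :=
  R.MemTa ∧ R.IsRefl ∧ (MLSet R R (LSet R) ∩ SHom R R).Nonempty

/-- `G` is a poset: reflexive, antisymmetric and transitive. -/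
def IsPoset (G : Dgraph) : Prop :=
  G.IsRefl ∧ (∀ v w, (v, w) ∈ G.A → (w, v) ∈ G.A → v = w) ∧
    (∀ u v w, (u, v) ∈ G.A → (v, w) ∈ G.A → (u, w) ∈ G.A)

/-- The class `𝔗ₐ^{=n}`: digraphs in `𝔗ₐ` of height `n` in which every vertex
lies on a path of length `n`. -/
def MemTaEq (n : ℕ) (G : Dgraph) : Prop :=
  G.MemTa ∧ G.height = n ∧ ∀ v ∈ G.V, ∃ p, G.IsPath p ∧ p.length = n + 1 ∧ v ∈ p

/-- A maximal path in `G`: no path in `G` properly contains its vertex set. -/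
def MaximalPath (G : Dgraph) (P : List ℕ) : Prop :=
  G.IsPath P ∧ ∀ Q, G.IsPath Q → (∀ v ∈ P, v ∈ Q) → ∀ v ∈ Q, v ∈ P

end Dgraph

/-!
If `ξ ∈ 𝓜^{𝓛(R)}(R,R)` is strict and `σ : G → R` is strict, then `ξ ∘ σ` is the required
map. Strictness of `σ` and acyclicity of `R*` make `σ` injective on every longest path `P` of
`G`, so `σ(P)` is a longest path of `R` (as `h_G = h_R`) and `σ` is an isomorphism
`P_× ≅ σ(P)_×`; the `μ`-maximality of `ξ` on `σ(P)_×` transfers along it. Conversely, apply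
the hypothesis to `G = R` and the identity.
-/

namespace Dgraph

/-- `Hom G H` without the normalisation to `0` outside `V(G)`, so that it is closed under
composition. -/
def IsHom (G H : Dgraph) (φ : ℕ → ℕ) : Prop :=
  (∀ v ∈ G.V, φ v ∈ H.V) ∧ ∀ p ∈ G.A, (φ p.1, φ p.2) ∈ H.A

section Hom

variable {G H K : Dgraph} {f g φ : ℕ → ℕ}

lemma isHom_of_mem_Hom (hf : f ∈ Hom G H) : IsHom G H f := ⟨hf.1, hf.2.1⟩

lemma isHom_id (G : Dgraph) : IsHom G G id := ⟨fun _ hv => hv, fun _ hp => hp⟩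

lemma IsHom.comp (hf : IsHom G H f) (hg : IsHom H K g) : IsHom G K (g ∘ f) :=
  ⟨fun v hv => hg.1 _ (hf.1 v hv), fun p hp => hg.2 _ (hf.2 p hp)⟩

lemma restrict_congr {X : Finset ℕ} (h : ∀ v ∈ X, f v = g v) : restrict X f = restrict X g := by
  funext v
  by_cases hv : v ∈ X <;> simp [restrict, hv, h]

lemma IsHom.restrict_mem_Hom (hφ : IsHom G H φ) : restrict G.V φ ∈ Hom G H := by
  refine ⟨fun v hv => by simpa [restrict, hv] using hφ.1 v hv, fun p hp => ?_,
    fun v hv => by simp [restrict, hv]⟩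
  obtain ⟨h1, h2⟩ := G.A_sub p hp
  simpa [restrict, h1, h2] using hφ.2 p hp

lemma map_mem_Astar_of_mem_SHom (hf : f ∈ SHom G H) {p : ℕ × ℕ} (hp : p ∈ G.Astar) :
    (f p.1, f p.2) ∈ H.Astar := by
  simp only [Astar, Finset.mem_filter] at hp ⊢
  exact ⟨hf.1.2.1 p hp.1, hf.2 p (by simpa [Astar] using hp)⟩

lemma comp_mem_SHom (hf : f ∈ SHom G H) (hg : g ∈ SHom H K) :
    restrict G.V (g ∘ f) ∈ SHom G K := by
  refine ⟨((isHom_of_mem_Hom hf.1).comp (isHom_of_mem_Hom hg.1)).restrict_mem_Hom, ?_⟩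
  intro p hp
  obtain ⟨h1, h2⟩ := G.A_sub p (Finset.mem_filter.mp hp).1
  simpa [restrict, h1, h2] using hg.2 _ (map_mem_Astar_of_mem_SHom hf hp)

lemma restrict_id_mem_SHom (G : Dgraph) : restrict G.V id ∈ SHom G G := by
  refine ⟨(isHom_id G).restrict_mem_Hom, fun p hp => ?_⟩
  obtain ⟨h1, h2⟩ := G.A_sub p (Finset.mem_filter.mp hp).1
  simpa [restrict, h1, h2] using (Finset.mem_filter.mp hp).2

lemma mu_congr (h : ∀ v ∈ G.V, f v = g v) : mu G H f = mu G H g := by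
  refine Finset.sum_congr rfl fun p hp => ?_
  obtain ⟨h1, h2⟩ := G.A_sub p (Finset.mem_filter.mp hp).1
  rw [h _ h1, h _ h2]

@[simp]
lemma mu_restrict : mu G H (restrict G.V f) = mu G H f :=
  mu_congr fun v hv => by simp [restrict, hv]

end Hom

structure IsIso (L L' : Dgraph) (σ τ : ℕ → ℕ) : Prop where
  isHom : IsHom L L' σ
  isHom_inv : IsHom L' L τ
  left_inv : ∀ v ∈ L.V, τ (σ v) = v
  right_inv : ∀ w ∈ L'.V, σ (τ w) = w

namespace IsIso

variable {L L' H : Dgraph} {σ τ f : ℕ → ℕ}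

lemma symm (h : IsIso L L' σ τ) : IsIso L' L τ σ :=
  ⟨h.isHom_inv, h.isHom, h.right_inv, h.left_inv⟩

lemma map_mem_Astar (h : IsIso L L' σ τ) {p : ℕ × ℕ} (hp : p ∈ L.Astar) :
    (σ p.1, σ p.2) ∈ L'.Astar := by
  simp only [Astar, Finset.mem_filter] at hp ⊢
  obtain ⟨h1, h2⟩ := L.A_sub p hp.1
  refine ⟨h.isHom.2 p hp.1, fun heq => hp.2 ?_⟩
  rw [← h.left_inv _ h1, heq, h.left_inv _ h2]

lemma mu_comp (h : IsIso L L' σ τ) : mu L H (f ∘ σ) = mu L' H f := by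
  refine Finset.sum_nbij' (Prod.map σ σ) (Prod.map τ τ) (fun p hp => h.map_mem_Astar hp)
    (fun q hq => h.symm.map_mem_Astar hq) (fun p hp => ?_) (fun q hq => ?_) fun _ _ => rfl
  · obtain ⟨h1, h2⟩ := L.A_sub p (Finset.mem_filter.mp hp).1
    exact Prod.ext (h.left_inv _ h1) (h.left_inv _ h2)
  · obtain ⟨h1, h2⟩ := L'.A_sub q (Finset.mem_filter.mp hq).1
    exact Prod.ext (h.right_inv _ h1) (h.right_inv _ h2)

lemma restrict_comp_mem_MSet (h : IsIso L L' σ τ) (hf : f ∈ MSet L' H) :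
    restrict L.V (f ∘ σ) ∈ MSet L H := by
  refine ⟨(h.isHom.comp (isHom_of_mem_Hom hf.1)).restrict_mem_Hom, fun g hg => ?_⟩
  have hgτ := (h.isHom_inv.comp (isHom_of_mem_Hom hg)).restrict_mem_Hom
  calc mu L H g = mu L' H (restrict L'.V (g ∘ τ)) := by rw [mu_restrict, h.symm.mu_comp]
    _ ≤ mu L' H f := hf.2 _ hgτ
    _ = mu L H (restrict L.V (f ∘ σ)) := by rw [mu_restrict, h.mu_comp]

end IsIso


section Path

variable {G H : Dgraph} {P Q : List ℕ} {σ : ℕ → ℕ}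

lemma IsPath.isChain_proper (hP : G.IsPath P) :
    P.IsChain (fun v w => (v, w) ∈ G.A ∧ v ≠ w) := by
  have hA : P.IsChain (fun v w => (v, w) ∈ G.A) := hP.2.2.2
  have hne : P.IsChain (· ≠ ·) := hP.2.1.isChain
  rw [List.isChain_iff_getElem] at hA hne ⊢
  exact fun i hi => ⟨hA i hi, hne i hi⟩

/-- A repeated vertex on a walk of proper arcs would close a walk in `G*`. -/
lemma MemTa.nodup_of_isChain (hG : G.MemTa) (hV : ∀ v ∈ Q, v ∈ G.V)
    (hQ : Q.IsChain (fun v w => (v, w) ∈ G.A ∧ v ≠ w)) : Q.Nodup := by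
  induction Q with
  | nil => simp
  | cons v t ih =>
    refine List.nodup_cons.mpr ⟨fun hv => hG ?_, ih (fun x hx => hV x (.tail _ hx)) hQ.tail⟩
    obtain ⟨s₁, s₂, rfl⟩ := List.append_of_mem hv
    refine ⟨v :: s₁ ++ [v], fun x hx => hV x ?_, ?_, by simp, ?_⟩
    · simp only [List.mem_append, List.mem_cons] at hx ⊢
      tauto
    · have he : v :: (s₁ ++ v :: s₂) = (v :: s₁ ++ [v]) ++ s₂ := by simp
      rw [he] at hQ
      exact (List.isChain_append.mp hQ).1
    · rw [List.getLast?_concat]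
      rfl

lemma isPath_map_of_mem_SHom (hH : H.MemTa) (hσ : σ ∈ SHom G H) (hP : G.IsPath P) :
    H.IsPath (P.map σ) := by
  have hV : ∀ v ∈ P.map σ, v ∈ H.V := by
    simp only [List.mem_map, forall_exists_index, and_imp, forall_apply_eq_imp_iff₂]
    exact fun a ha => hσ.1.1 a (hP.2.2.1 a ha)
  have hQ : (P.map σ).IsChain (fun v w => (v, w) ∈ H.A ∧ v ≠ w) :=
    List.isChain_map σ |>.mpr <| hP.isChain_proper.imp fun a b hab =>
      map_mem_Astar_of_mem_SHom hσ (p := (a, b)) (Finset.mem_filter.mpr hab) |> Finset.mem_filter.mp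
  exact ⟨by simpa using hP.1, hH.nodup_of_isChain hV hQ, hV, hQ.imp fun _ _ h => h.1⟩

@[simp]
lemma mem_pathGraph_V (h : P ≠ []) {v : ℕ} : v ∈ (pathGraph P h).V ↔ v ∈ P := by
  simp [pathGraph]

@[simp]
lemma mem_pathGraph_A (h : P ≠ []) {p : ℕ × ℕ} : p ∈ (pathGraph P h).A ↔ p ∈ P.zip P.tail := by
  simp [pathGraph]

lemma exists_isIso_pathGraph_map (hne : P ≠ []) (hne' : P.map σ ≠ []) (hnd : (P.map σ).Nodup) :
    ∃ τ, IsIso (pathGraph P hne) (pathGraph (P.map σ) hne') σ τ := by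
  have hinj : Set.InjOn σ {a | a ∈ P} := List.inj_on_of_nodup_map hnd
  set τ := Function.invFunOn σ {a | a ∈ P}
  have hτσ : ∀ a ∈ P, τ (σ a) = a := fun a ha => hinj.leftInvOn_invFunOn ha
  have harcs : (P.map σ).zip (P.map σ).tail = (P.zip P.tail).map (Prod.map σ σ) := by
    rw [← List.map_tail, ← List.zip_map]
  refine ⟨τ, ⟨?_, ?_⟩, ⟨?_, ?_⟩, ?_, ?_⟩
  · simpa using fun a ha => List.mem_map_of_mem ha
  · simp only [mem_pathGraph_A, harcs]
    exact fun p hp => List.mem_map_of_mem (f := Prod.map σ σ) hp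
  · simp only [mem_pathGraph_V, List.mem_map, forall_exists_index, and_imp,
      forall_apply_eq_imp_iff₂]
    exact fun a ha => (hτσ a ha).symm ▸ ha
  · simp only [mem_pathGraph_A, harcs, List.mem_map, forall_exists_index, and_imp]
    rintro _ p hp rfl
    have h1 := (List.of_mem_zip hp).1
    have h2 := List.mem_of_mem_tail (List.of_mem_zip hp).2
    simpa [hτσ _ h1, hτσ _ h2] using hp
  · simpa using hτσ
  · simp only [mem_pathGraph_V, List.mem_map, forall_exists_index, and_imp,
      forall_apply_eq_imp_iff₂]
    exact fun a ha => by rw [hτσ a ha]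

end Path

lemma restrict_comp_mem_MLSet {G H K : Dgraph} {σ ξ : ℕ → ℕ} (hH : H.MemTa)
    (hh : G.height = H.height) (hσ : σ ∈ SHom G H) (hξ : ξ ∈ MLSet H K (LSet H)) :
    restrict G.V (ξ ∘ σ) ∈ MLSet G K (LSet G) := by
  refine ⟨((isHom_of_mem_Hom hσ.1).comp (isHom_of_mem_Hom hξ.1)).restrict_mem_Hom, ?_⟩
  rintro _ ⟨P, hne, hP, hlen, rfl⟩
  have hQ := isPath_map_of_mem_SHom hH hσ hP
  have hQL : pathGraph (P.map σ) hQ.1 ∈ LSet H :=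
    ⟨_, hQ.1, hQ, by rw [List.length_map, hlen, hh], rfl⟩
  obtain ⟨τ, hiso⟩ := exists_isIso_pathGraph_map hne hQ.1 hQ.2.1
  convert hiso.restrict_comp_mem_MSet (hξ.2 _ hQL) using 1
  refine restrict_congr fun v hv => ?_
  rw [mem_pathGraph_V] at hv
  have hσv : ∃ a ∈ P, σ a = σ v := ⟨v, hv, rfl⟩
  simp [restrict, hσv, hP.2.2.1 v hv]

end Dgraph

open Dgraph

theorem stmt_10 (R : Dgraph) (hRr : R.IsRefl) (hRt : R.MemTa) :
    MemR R ↔ ∀ G : Dgraph, G.MemTa → G.height = R.height →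
      (SHom G R).Nonempty → (MLSet G R (LSet G) ∩ SHom G R).Nonempty := by
  constructor
  · rintro ⟨-, -, ξ, hξM, hξS⟩ G - hh ⟨σ, hσ⟩
    exact ⟨_, restrict_comp_mem_MLSet hRt hh hσ hξM, comp_mem_SHom hσ hξS⟩
  · exact fun h => ⟨hRt, hRr, h R hRt rfl ⟨_, restrict_id_mem_SHom R⟩⟩
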